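/- Let q be a prime power, let Ω ⊆ D_1, let E ⊆ H_1(F_q), and let m be an integer with 1 ≤ m ≤ q. Assume that for every ω ∈ Ω there exists a horizontal line L in H_1(F_q) with Dir(L) = ω and |E ∩ L| ≥ m. Then |E| ≥ m^2 · |Ω| / (25 q). -/

import Mathlib

/-!
`K` plays the role of the finite field `F_q` with `q = Fintype.card K` elements
(the cardinality of a finite field is automatically a prime power).
The Heisenberg group `H₁(F_q)` is identified with `K × K × K`.
The set `D₁` of non-vertical (refined) projective directions
`{[a : b : c] ∈ P²(F_q) : (a,b) ≠ (0,0)}` is identified with `Option K × K`: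
`(some m, γ)` corresponds to `[1 : m : γ]` and `(none, γ)` to `[0 : 1 : γ]`
(every element of `D₁` has a unique such normal form).
-/

noncomputable section

open Finset

/-- The point with parameter `s` of the horizontal line with refined direction
`ω ∈ D₁` indexed by `τ ∈ F_q`.  For `ω = [1 : m : γ]` the `q` horizontal lines
with `Dir L = ω` are `{(x, m x - γ, τ + γ x) : x ∈ F_q}`, `τ ∈ F_q`; for
`ω = [0 : 1 : γ]` they are `{(γ, y, τ + γ y) : y ∈ F_q}`, `τ ∈ F_q`. -/
def lineRd {K : Type*} [Field K] (ω : Option K × K) (τ : K) (s : K) : K × K × K :=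
  match ω.1 with
  | some m => (s, m * s - ω.2, τ + ω.2 * s)
  | none => (ω.2, s, τ + ω.2 * s)

/-- The refined-direction maximal function `M^rd F` on `D₁ ≃ Option K × K`:
the maximum, over the `q` horizontal lines `L` with `Dir L = ω`, of the sum of
`|F|` along `L`. -/
def Mrd {K : Type*} [Field K] [Fintype K] (Fc : K × K × K → ℂ) (ω : Option K × K) : ℝ :=
  Finset.univ.sup' ⟨(0 : K), Finset.mem_univ _⟩
    fun τ => ∑ s : K, ‖Fc (lineRd ω τ s)‖

def lpNormC {X : Type*} [Fintype X] (r : ℝ) (g : X → ℂ) : ℝ :=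
  (∑ x, ‖g x‖ ^ r) ^ (1 / r)

def lpNormR {X : Type*} [Fintype X] (r : ℝ) (g : X → ℝ) : ℝ :=
  (∑ x, |g x| ^ r) ^ (1 / r)

/-!
Fix a primitive additive character `ψ` of `K` and take Fourier transforms in the central
coordinate `t`. For a direction `ω`, the `l`-th Fourier coefficient of `τ ↦ |E ∩ L_{ω,τ}|` is a
twisted X-ray transform, along the planar line under `ω`, of the `l`-th Fourier coefficient `f`
of the fibre counts of `E`. As two distinct points of `K²` lie on exactly one such line and a
point lies on `q + 1` of them, the squared `ℓ²` norm of this transform over all directions is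
`q ‖f‖²` plus a symplectic Fourier form of `f`, which is at most `q ‖f‖²` for `l ≠ 0` by
Parseval. A line with `m` points of `E` forces `q m ≤ ∑ₗ |coefficient l|`; summing the squares
over `Ω` and using Parseval in `t` gives `m² |Ω| ≤ 4 q |E|`.
-/

open ComplexConjugate

namespace FiniteHeisenberg

theorem sum_sq_norm_sum_mul_of_orthogonal {V W : Type*} [Fintype V] [Fintype W] [DecidableEq V]
    (e : W → V → ℂ) (N : ℝ)
    (he : ∀ v v', ∑ w, e w v * conj (e w v') = if v = v' then (N : ℂ) else 0) (f : V → ℂ) :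
    ∑ w, ‖∑ v, f v * e w v‖ ^ 2 = N * ∑ v, ‖f v‖ ^ 2 := by
  apply Complex.ofReal_injective
  push_cast
  simp_rw [← Complex.mul_conj', map_sum, map_mul, sum_mul_sum]
  calc ∑ w, ∑ v, ∑ v', f v * e w v * (conj (f v') * conj (e w v'))
      = ∑ v, ∑ v', f v * conj (f v') * ∑ w, e w v * conj (e w v') := by
        rw [sum_comm]
        refine sum_congr rfl fun v _ => ?_
        rw [sum_comm]
        simp_rw [mul_sum]
        exact sum_congr rfl fun v' _ => sum_congr rfl fun w _ => by ring
    _ = N * ∑ v, f v * conj (f v) := by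
        simp_rw [he, mul_ite, mul_zero, sum_ite_eq, mem_univ, if_true, mul_sum]
        exact sum_congr rfl fun v _ => by ring

variable {K : Type*}

section Fourier

variable [Field K] [Fintype K]
variable (ψ : AddChar K ℂ)

def dft (g : K → ℂ) (l : K) : ℂ := ∑ t, g t * ψ (-(l * t))

theorem sum_mul_dft (hψ : ψ.IsPrimitive) (g : K → ℂ) (τ : K) :
    ∑ l, ψ (l * τ) * dft ψ g l = Fintype.card K * g τ := by
  classical
  calc ∑ l, ψ (l * τ) * dft ψ g l = ∑ t, g t * ∑ l, ψ (l * (τ - t)) := by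
        simp_rw [dft, mul_sum]
        rw [sum_comm]
        refine sum_congr rfl fun t _ => sum_congr rfl fun l _ => ?_
        rw [mul_sub, sub_eq_add_neg, AddChar.map_add_eq_mul]
        ring
    _ = Fintype.card K * g τ := by
        simp_rw [AddChar.sum_mulShift _ hψ, sub_eq_zero, Nat.cast_ite, Nat.cast_zero, mul_ite,
          mul_zero, sum_ite_eq, mem_univ, if_true, mul_comm]

theorem card_mul_norm_le_sum_norm_dft (hψ : ψ.IsPrimitive) (g : K → ℂ) (τ : K) :
    Fintype.card K * ‖g τ‖ ≤ ∑ l, ‖dft ψ g l‖ := by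
  have h := norm_sum_le univ fun l => ψ (l * τ) * dft ψ g l
  simpa [sum_mul_dft ψ hψ, AddChar.norm_apply] using h

theorem sum_sq_norm_dft (hψ : ψ.IsPrimitive) (g : K → ℂ) :
    ∑ l, ‖dft ψ g l‖ ^ 2 = Fintype.card K * ∑ t, ‖g t‖ ^ 2 := by
  classical
  refine sum_sq_norm_sum_mul_of_orthogonal _ _ (fun t t' => ?_) g
  simp_rw [← AddChar.map_neg_eq_conj, neg_neg, ← AddChar.map_add_eq_mul, neg_add_eq_sub,
    ← mul_sub, AddChar.sum_mulShift _ hψ, sub_eq_zero, eq_comm (a := t')]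
  push_cast
  rfl

theorem dft_sum {ι : Type*} (s : Finset ι) (g : ι → K → ℂ) (l : K) :
    dft ψ (fun t => ∑ i ∈ s, g i t) l = ∑ i ∈ s, dft ψ (g i) l := by
  simp_rw [dft, sum_mul]
  exact sum_comm

theorem dft_comp_add_right (g : K → ℂ) (c l : K) :
    dft ψ (fun t => g (t + c)) l = ψ (l * c) * dft ψ g l := by
  rw [dft, dft, mul_sum]
  refine Fintype.sum_equiv (Equiv.addRight c) _ _ fun t => ?_
  rw [Equiv.coe_addRight, mul_left_comm, ← AddChar.map_add_eq_mul]
  ring_nf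

theorem sq_card_mul_norm_le_sum_sq_norm_dft [DecidableEq K] (hψ : ψ.IsPrimitive) (g : K → ℂ)
    (τ : K) :
    (Fintype.card K * ‖g τ‖) ^ 2
      ≤ 2 * ‖dft ψ g 0‖ ^ 2 + 2 * Fintype.card K * ∑ l ∈ univ.erase 0, ‖dft ψ g l‖ ^ 2 := by
  have hsplit : Fintype.card K * ‖g τ‖ ≤ ‖dft ψ g 0‖ + ∑ l ∈ univ.erase 0, ‖dft ψ g l‖ :=
    (card_mul_norm_le_sum_norm_dft ψ hψ g τ).trans_eq (add_sum_erase _ _ (mem_univ 0)).symm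
  have hrest : (∑ l ∈ univ.erase 0, ‖dft ψ g l‖) ^ 2
      ≤ Fintype.card K * ∑ l ∈ univ.erase 0, ‖dft ψ g l‖ ^ 2 := by
    refine sq_sum_le_card_mul_sum_sq.trans (mul_le_mul_of_nonneg_right ?_ (by positivity))
    exact_mod_cast (card_erase_le).trans_eq card_univ
  have hq : 0 ≤ (Fintype.card K : ℝ) * ‖g τ‖ := by positivity
  nlinarith [sq_nonneg (‖dft ψ g 0‖ - ∑ l ∈ univ.erase 0, ‖dft ψ g l‖)]

end Fourier

section Plane

variable [Field K]

def basePoint : Option K × K → K → K × K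
  | (some a, γ), s => (s, a * s - γ)
  | (none, γ), s => (γ, s)

theorem lineRd_eq_basePoint (ω : Option K × K) (τ s : K) :
    lineRd ω τ s = ((basePoint ω s).1, (basePoint ω s).2, τ + ω.2 * s) := by
  obtain ⟨_ | _, _⟩ := ω <;> rfl

def cross (v w : K × K) : K := v.1 * w.2 - v.2 * w.1

theorem mul_sub_eq_cross_basePoint (ω : Option K × K) (s s' : K) :
    ω.2 * (s - s') = cross (basePoint ω s') (basePoint ω s) := by
  obtain ⟨_ | _, _⟩ := ω <;> simp only [basePoint, cross] <;> ring

variable [Fintype K]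

theorem sum_mul_add_of_ne_zero {M : Type*} [AddCommMonoid M] (f : K → M) {d : K} (hd : d ≠ 0)
    (y : K) : ∑ a, f (a * d + y) = ∑ y', f y' :=
  Fintype.sum_equiv ((Equiv.mulRight₀ d hd).trans (Equiv.addRight y)) _ _ fun _ => rfl

/-- Two distinct points of `K²` lie on exactly one of the lines `basePoint ω`, and a point lies
on `q + 1` of them. -/
theorem sum_basePoint_pairs {M : Type*} [AddCommMonoid M] (G : K × K → K × K → M) :
    ∑ ω, ∑ s, ∑ s', G (basePoint ω s) (basePoint ω s')
      = Fintype.card K • ∑ v, G v v + ∑ v, ∑ v', G v v' := by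
  classical
  have hnone : ∑ γ, ∑ s, ∑ s', G (basePoint (none, γ) s) (basePoint (none, γ) s')
      = ∑ v : K × K, ∑ y', G v (v.1, y') := by
    rw [Fintype.sum_prod_type]
    rfl
  have hsome (a : K) : ∑ γ, ∑ s, ∑ s', G (basePoint (some a, γ) s) (basePoint (some a, γ) s')
      = ∑ v : K × K, ∑ x', G v (x', a * (x' - v.1) + v.2) := by
    rw [sum_comm, Fintype.sum_prod_type]
    refine sum_congr rfl fun s _ => Fintype.sum_equiv (Equiv.subLeft (a * s)) _ _ fun γ => ?_
    simp only [basePoint, Equiv.subLeft_apply]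
    congr! 3
    ring
  have hline (v : K × K) : ∑ a, ∑ x', G v (x', a * (x' - v.1) + v.2)
      = Fintype.card K • G v v + ∑ x' ∈ univ.erase v.1, ∑ y', G v (x', y') := by
    rw [sum_comm, ← add_sum_erase _ _ (mem_univ v.1)]
    congr 1
    · simp
    · exact sum_congr rfl fun x' hx' =>
        sum_mul_add_of_ne_zero (fun y => G v (x', y)) (sub_ne_zero.2 (ne_of_mem_erase hx')) _
  have hrow (v : K × K) : ∑ v', G v v'
      = ∑ y', G v (v.1, y') + ∑ x' ∈ univ.erase v.1, ∑ y', G v (x', y') := by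
    rw [Fintype.sum_prod_type, ← add_sum_erase _ _ (mem_univ v.1)]
  have hall : ∑ a, ∑ γ, ∑ s, ∑ s', G (basePoint (some a, γ) s) (basePoint (some a, γ) s')
      = ∑ v : K × K, (Fintype.card K • G v v + ∑ x' ∈ univ.erase v.1, ∑ y', G v (x', y')) := by
    rw [sum_congr rfl fun a _ => hsome a, sum_comm]
    exact sum_congr rfl fun v _ => hline v
  rw [Fintype.sum_prod_type, Fintype.sum_option, hnone, hall, sum_congr rfl fun v _ => hrow v,
    smul_sum, ← sum_add_distrib, ← sum_add_distrib]
  exact sum_congr rfl fun v _ => by abel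

end Plane

section Radon

variable [Field K] [Fintype K] (χ : AddChar K ℂ)

def radon (f : K × K → ℂ) (ω : Option K × K) : ℂ := ∑ s, f (basePoint ω s) * χ (ω.2 * s)

def twist (f : K × K → ℂ) : ℂ := ∑ v, ∑ v', f v * conj (f v') * χ (cross v' v)

theorem sum_sq_norm_radon (f : K × K → ℂ) :
    ((∑ ω, ‖radon χ f ω‖ ^ 2 : ℝ) : ℂ)
      = ((Fintype.card K * ∑ v, ‖f v‖ ^ 2 : ℝ) : ℂ) + twist χ f := by
  push_cast
  simp_rw [← Complex.mul_conj', radon, map_sum, map_mul, sum_mul_sum]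
  have hpair (ω : Option K × K) (s s' : K) :
      f (basePoint ω s) * χ (ω.2 * s) * (conj (f (basePoint ω s')) * conj (χ (ω.2 * s')))
        = f (basePoint ω s) * conj (f (basePoint ω s'))
          * χ (cross (basePoint ω s') (basePoint ω s)) := by
    rw [← AddChar.map_neg_eq_conj, ← mul_sub_eq_cross_basePoint, mul_sub, sub_eq_add_neg,
      AddChar.map_add_eq_mul]
    ring
  simp_rw [hpair]
  rw [sum_basePoint_pairs (fun v v' => f v * conj (f v') * χ (cross v' v)), twist, nsmul_eq_mul]
  simp [cross, mul_comm]

theorem sum_sq_norm_radon_le (f : K × K → ℂ) :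
    ∑ ω, ‖radon χ f ω‖ ^ 2 ≤ Fintype.card K * ∑ v, ‖f v‖ ^ 2 + ‖twist χ f‖ := by
  have h := congrArg Complex.re (sum_sq_norm_radon χ f)
  rw [Complex.ofReal_re, Complex.add_re, Complex.ofReal_re] at h
  linarith [Complex.re_le_norm (twist χ f)]

theorem norm_twist_le (f : K × K → ℂ) : ‖twist χ f‖ ≤ (∑ v, ‖f v‖) ^ 2 := by
  calc ‖twist χ f‖ ≤ ∑ v, ∑ v', ‖f v * conj (f v') * χ (cross v' v)‖ :=
        (norm_sum_le _ _).trans (sum_le_sum fun v _ => norm_sum_le _ _)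
    _ = (∑ v, ‖f v‖) ^ 2 := by simp [AddChar.norm_apply, sq, sum_mul_sum]

theorem norm_twist_le_of_isPrimitive (hχ : χ.IsPrimitive) (f : K × K → ℂ) :
    ‖twist χ f‖ ≤ Fintype.card K * ∑ v, ‖f v‖ ^ 2 := by
  classical
  -- `T` is the symplectic Fourier transform of `f`, so Parseval gives `‖T‖₂ = q ‖f‖₂`.
  set T : K × K → ℂ := fun v' => ∑ v, f v * χ (cross v' v)
  have horth (v w : K × K) : ∑ v', χ (cross v' v) * conj (χ (cross v' w))
      = if v = w then ((Fintype.card K ^ 2 : ℝ) : ℂ) else 0 := by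
    have hsplit (x y : K) :
        cross (x, y) v + -cross (x, y) w = x * (v.2 - w.2) + y * (w.1 - v.1) := by
      simp only [cross]
      ring
    simp_rw [← AddChar.map_neg_eq_conj, ← AddChar.map_add_eq_mul, Fintype.sum_prod_type, hsplit,
      AddChar.map_add_eq_mul, ← sum_mul_sum, AddChar.sum_mulShift _ hχ, sub_eq_zero, Prod.ext_iff,
      eq_comm (a := w.1)]
    by_cases h₁ : v.1 = w.1 <;> by_cases h₂ : v.2 = w.2 <;> simp [h₁, h₂, sq]
  have hT : ∑ v', ‖T v'‖ ^ 2 = Fintype.card K ^ 2 * ∑ v, ‖f v‖ ^ 2 :=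
    sum_sq_norm_sum_mul_of_orthogonal (fun v' v => χ (cross v' v)) _ horth f
  have htwist : twist χ f = ∑ v', conj (f v') * T v' := by
    rw [twist, sum_comm]
    simp_rw [T, mul_sum]
    exact sum_congr rfl fun v' _ => sum_congr rfl fun v _ => by ring
  have hCS : (∑ v, ‖f v‖ * ‖T v‖) ^ 2 ≤ (Fintype.card K * ∑ v, ‖f v‖ ^ 2) ^ 2 := by
    calc (∑ v, ‖f v‖ * ‖T v‖) ^ 2 ≤ (∑ v, ‖f v‖ ^ 2) * ∑ v, ‖T v‖ ^ 2 :=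
          sum_mul_sq_le_sq_mul_sq _ _ _
      _ = (Fintype.card K * ∑ v, ‖f v‖ ^ 2) ^ 2 := by rw [hT]; ring
  calc ‖twist χ f‖ ≤ ∑ v, ‖f v‖ * ‖T v‖ := by
        rw [htwist]
        refine (norm_sum_le _ _).trans_eq (sum_congr rfl fun v _ => ?_)
        rw [norm_mul, Complex.norm_conj]
    _ ≤ Fintype.card K * ∑ v, ‖f v‖ ^ 2 :=
        (pow_le_pow_iff_left₀ (by positivity) (by positivity) two_ne_zero).1 hCS

end Radon

section Counting

variable [Fintype K] [DecidableEq K] (E : Finset (K × K × K))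

def fibre (v : K × K) (t : K) : ℂ := if (v.1, v.2, t) ∈ E then 1 else 0

theorem sum_sum_sq_norm_fibre : ∑ v, ∑ t, ‖fibre E v t‖ ^ 2 = #E := by
  have h (p : K × K × K) : ‖if p ∈ E then (1 : ℂ) else 0‖ ^ 2 = if p ∈ E then 1 else 0 := by
    split_ifs <;> simp
  simp_rw [fibre, h, ← Fintype.sum_prod_type']
  rw [← (Equiv.prodAssoc K K K).symm.sum_comp]
  simp

variable [Field K] (ψ : AddChar K ℂ)

def lineCount (ω : Option K × K) (τ : K) : ℕ := #{s | lineRd ω τ s ∈ E}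

theorem lineCount_eq_sum_fibre (ω : Option K × K) (τ : K) :
    (lineCount E ω τ : ℂ) = ∑ s, fibre E (basePoint ω s) (τ + ω.2 * s) := by
  rw [lineCount, card_filter]
  push_cast
  simp_rw [lineRd_eq_basePoint]
  rfl

theorem dft_lineCount (ω : Option K × K) (l : K) :
    dft ψ (fun τ => (lineCount E ω τ : ℂ)) l
      = radon (ψ.mulShift l) (fun v => dft ψ (fibre E v) l) ω := by
  simp_rw [lineCount_eq_sum_fibre, dft_sum, dft_comp_add_right, radon, AddChar.mulShift_apply,
    mul_comm]

theorem sum_sum_sq_norm_dft_fibre (hψ : ψ.IsPrimitive) :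
    ∑ l, ∑ v, ‖dft ψ (fibre E v) l‖ ^ 2 = Fintype.card K * #E := by
  rw [sum_comm]
  simp_rw [sum_sq_norm_dft ψ hψ, ← mul_sum, sum_sum_sq_norm_fibre]

theorem sum_sq_norm_dft_lineCount_le (l : K) :
    ∑ ω, ‖dft ψ (fun τ => (lineCount E ω τ : ℂ)) l‖ ^ 2
      ≤ 2 * Fintype.card K ^ 2 * ∑ v, ‖dft ψ (fibre E v) l‖ ^ 2 := by
  set f : K × K → ℂ := fun v => dft ψ (fibre E v) l
  have hf : (∑ v, ‖f v‖) ^ 2 ≤ Fintype.card K ^ 2 * ∑ v, ‖f v‖ ^ 2 := by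
    simpa [sq] using sq_sum_le_card_mul_sum_sq (s := univ) (f := fun v => ‖f v‖)
  have hq : (Fintype.card K : ℝ) ≤ Fintype.card K ^ 2 := by
    exact_mod_cast Nat.le_self_pow two_ne_zero _
  simp_rw [dft_lineCount]
  have hradon := sum_sq_norm_radon_le (ψ.mulShift l) f
  have htwist := norm_twist_le (ψ.mulShift l) f
  nlinarith [sum_nonneg fun v (_ : v ∈ univ) => sq_nonneg ‖f v‖]

theorem sum_sq_norm_dft_lineCount_le_of_ne_zero (hψ : ψ.IsPrimitive) {l : K} (hl : l ≠ 0) :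
    ∑ ω, ‖dft ψ (fun τ => (lineCount E ω τ : ℂ)) l‖ ^ 2
      ≤ 2 * Fintype.card K * ∑ v, ‖dft ψ (fibre E v) l‖ ^ 2 := by
  simp_rw [dft_lineCount]
  have hradon := sum_sq_norm_radon_le (ψ.mulShift l) fun v => dft ψ (fibre E v) l
  have htwist := norm_twist_le_of_isPrimitive _ (AddChar.IsPrimitive.of_ne_one (hψ hl))
    fun v => dft ψ (fibre E v) l
  linarith

theorem sq_mul_card_le_of_le_lineCount {Ω : Finset (Option K × K)} {m : ℕ}
    (hΩ : ∀ ω ∈ Ω, ∃ τ, m ≤ lineCount E ω τ) :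
    (m : ℝ) ^ 2 * #Ω ≤ 4 * Fintype.card K * #E := by
  set q : ℝ := (Fintype.card K : ℝ)
  set ψ := AddChar.FiniteField.primitiveChar_to_Complex K
  have hψ : ψ.IsPrimitive := AddChar.FiniteField.primitiveChar_to_Complex_isPrimitive K
  set Λ : Option K × K → K → ℝ := fun ω l => ‖dft ψ (fun τ => (lineCount E ω τ : ℂ)) l‖
  set P : K → ℝ := fun l => ∑ v, ‖dft ψ (fibre E v) l‖ ^ 2
  have hq : 0 < q := Nat.cast_pos.2 Fintype.card_pos
  suffices q ^ 2 * ((m : ℝ) ^ 2 * #Ω) ≤ q ^ 2 * (4 * q * #E) from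
    le_of_mul_le_mul_left this (by positivity)
  calc q ^ 2 * ((m : ℝ) ^ 2 * #Ω) = ∑ _ω ∈ Ω, (q * m) ^ 2 := by rw [sum_const, nsmul_eq_mul]; ring
    _ ≤ ∑ ω ∈ Ω, (2 * Λ ω 0 ^ 2 + 2 * q * ∑ l ∈ univ.erase 0, Λ ω l ^ 2) :=
        sum_le_sum fun ω hω => (hΩ ω hω).elim fun τ h => by
          refine le_trans ?_ (sq_card_mul_norm_le_sum_sq_norm_dft ψ hψ _ τ)
          rw [Complex.norm_natCast]
          gcongr
    _ ≤ ∑ ω, (2 * Λ ω 0 ^ 2 + 2 * q * ∑ l ∈ univ.erase 0, Λ ω l ^ 2) :=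
        sum_le_sum_of_subset_of_nonneg (subset_univ _) fun _ _ _ => by positivity
    _ = 2 * ∑ ω, Λ ω 0 ^ 2 + 2 * q * ∑ l ∈ univ.erase 0, ∑ ω, Λ ω l ^ 2 := by
        rw [sum_add_distrib, ← mul_sum, ← mul_sum, sum_comm]
    _ ≤ 2 * (2 * q ^ 2 * P 0) + 2 * q * ∑ l ∈ univ.erase 0, 2 * q * P l := by
        gcongr with l hl
        · exact sum_sq_norm_dft_lineCount_le E ψ 0
        · exact sum_sq_norm_dft_lineCount_le_of_ne_zero E ψ hψ (ne_of_mem_erase hl)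
    _ = 4 * q ^ 2 * ∑ l, P l := by
        rw [← mul_sum, ← add_sum_erase _ _ (mem_univ 0)]
        ring
    _ = q ^ 2 * (4 * q * #E) := by
        rw [sum_sum_sq_norm_dft_fibre E ψ hψ]
        ring

end Counting

end FiniteHeisenberg

open FiniteHeisenberg

theorem stmt_17_general {K : Type*} [Field K] [Fintype K] [DecidableEq K]
    (Ω : Finset (Option K × K)) (E : Finset (K × K × K)) (m : ℕ)
    (hΩ : ∀ ω ∈ Ω, ∃ τ : K,
      m ≤ (Finset.univ.filter fun s : K => lineRd ω τ s ∈ E).card) :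
    ((m : ℝ) ^ 2 * (Ω.card : ℝ)) / (25 * (Fintype.card K : ℝ)) ≤ (E.card : ℝ) := by
  have hq : (0 : ℝ) < Fintype.card K := Nat.cast_pos.2 Fintype.card_pos
  have h := sq_mul_card_le_of_le_lineCount E hΩ
  rw [div_le_iff₀ (by positivity)]
  linarith [mul_nonneg hq.le (Nat.cast_nonneg (α := ℝ) #E)]

/-- lower bound for sets with many rich horizontal lines.
If for every `ω ∈ Ω ⊆ D₁` there is a horizontal line `L` with `Dir L = ω` and
`|E ∩ L| ≥ m`, where `1 ≤ m ≤ q`, then `|E| ≥ m² |Ω| / (25 q)`. -/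
theorem stmt_17 {K : Type*} [Field K] [Fintype K] [DecidableEq K]
    (Ω : Finset (Option K × K)) (E : Finset (K × K × K)) (m : ℕ)
    (hm1 : 1 ≤ m) (hmq : m ≤ Fintype.card K)
    (hΩ : ∀ ω ∈ Ω, ∃ τ : K,
      m ≤ (Finset.univ.filter fun s : K => lineRd ω τ s ∈ E).card) :
    ((m : ℝ) ^ 2 * (Ω.card : ℝ)) / (25 * (Fintype.card K : ℝ)) ≤ (E.card : ℝ) :=
  stmt_17_general Ω E m hΩ
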